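/- arXiv:1607.01421 — 10 statements merged into one kernel-verified Lean document; each statement's English description precedes it below -/
import Mathlib

section
/- Let u : [0,∞) → X be a continuously differentiable path satisfying A[t;u₀](u(t) − u₀) = t F(u₀) in X' for all t ≥ 0, with u(0) = u₀. Suppose F is Fréchet differentiable everywhere with derivative F'. Then for every t ≥ 0 one has the identity F(u(t)) = A[t;u₀] u̇(t) + ∫₀ᵗ (F'(u(s)) − F'(u₀)) u̇(s) ds in X'. -/
open NormedSpace Set intervalIntegral
open scoped RealInnerProductSpace

/-- If `u : [0,∞) → X` is a continuously differentiable path with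
`u(0) = u₀` and `A[t;u₀](u(t) − u₀) = t F(u₀)` for all `t ≥ 0`, and `F` is Fréchet
differentiable everywhere, then for every `t ≥ 0`:
`F(u(t)) = A[t;u₀] u̇(t) + ∫₀ᵗ (F'(u(s)) − F'(u₀)) u̇(s) ds` in `X'`. -/
theorem stmt_8 {X : Type*} [NormedAddCommGroup X] [InnerProductSpace ℝ X] [CompleteSpace X]
    (u₀ : X) (F : X → StrongDual ℝ X) (F' : X → (X →L[ℝ] StrongDual ℝ X))
    (hF : ∀ x : X, HasFDerivAt F (F' x) x)
    (A : ℝ → X →L[ℝ] StrongDual ℝ X)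
    (hA : ∀ (t : ℝ) (x v : X), A t x v = ⟪x, v⟫ - t * (F' u₀) x v)
    (u u' : ℝ → X)
    (hderiv : ∀ t ∈ Ici (0 : ℝ), HasDerivWithinAt u (u' t) (Ici 0) t)
    (hu'cont : ContinuousOn u' (Ici 0))
    (hu0 : u 0 = u₀)
    (heq : ∀ t ∈ Ici (0 : ℝ), A t (u t - u₀) = t • F u₀)
    (hcont : ContinuousOn (fun s => (F' (u s) - F' u₀) (u' s)) (Ici 0)) :
    ∀ t ∈ Ici (0 : ℝ),
      F (u t) = A t (u' t) + ∫ s in (0 : ℝ)..t, (F' (u s) - F' u₀) (u' s) := by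
  intro t ht
  have hucont : ContinuousOn u (Ici 0) := fun s hs => (hderiv s hs).continuousWithinAt
  have hFc : Continuous F := continuous_iff_continuousAt.2 fun x => (hF x).continuousAt
  -- integrability of the Dual-valued integrand
  have hInt : IntervalIntegrable (fun s => (F' (u s) - F' u₀) (u' s)) MeasureTheory.volume 0 t :=
    (hcont.mono (by rw [uIcc_of_le ht]; exact Icc_subset_Ici_self)).intervalIntegrable
  ext v
  rw [ContinuousLinearMap.add_apply, ContinuousLinearMap.intervalIntegral_apply hInt v]
  -- evaluation functional
  set ev : (StrongDual ℝ X) →L[ℝ] ℝ := ContinuousLinearMap.apply ℝ ℝ v with hev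
  -- step 1: A t (u' t) v = F u₀ v + F' u₀ (u t - u₀) v, by differentiating the constraint
  have hsub : ∀ s ∈ Ici (0:ℝ), HasDerivWithinAt (fun r => u r - u₀) (u' s) (Ici 0) s :=
    fun s hs => (hderiv s hs).sub_const u₀
  have c1 : HasDerivWithinAt (fun s => (inner ℝ (u s - u₀) v : ℝ)) (inner ℝ (u' t) v) (Ici 0) t := by
    have := HasDerivWithinAt.inner ℝ (hsub t ht) (hasDerivWithinAt_const t (Ici 0) v)
    simpa using this
  have c2 : HasDerivWithinAt (fun s => s * (F' u₀) (u s - u₀) v)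
      (1 * (F' u₀) (u t - u₀) v + t * ev ((F' u₀) (u' t))) (Ici 0) t := by
    have h2 : HasDerivWithinAt (fun s => ev ((F' u₀) (u s - u₀))) (ev ((F' u₀) (u' t))) (Ici 0) t :=
      (ev.comp (F' u₀)).hasFDerivAt.comp_hasDerivWithinAt t (hsub t ht)
    exact (hasDerivWithinAt_id t _).mul h2
  have c3 : HasDerivWithinAt (fun s => s * (F u₀) v) (F u₀ v) (Ici 0) t := by
    simpa using (hasDerivWithinAt_id t (Ici 0)).mul_const ((F u₀) v)
  have cf : HasDerivWithinAt
      (fun s => (inner ℝ (u s - u₀) v : ℝ) - s * (F' u₀) (u s - u₀) v - s * (F u₀) v)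
      ((inner ℝ (u' t) v : ℝ) - (1 * (F' u₀) (u t - u₀) v + t * ev ((F' u₀) (u' t))) - F u₀ v)
      (Ici 0) t := (c1.sub c2).sub c3
  have cf0 : HasDerivWithinAt
      (fun s => (inner ℝ (u s - u₀) v : ℝ) - s * (F' u₀) (u s - u₀) v - s * (F u₀) v)
      0 (Ici 0) t := by
    apply (hasDerivWithinAt_const t (Ici 0) (0:ℝ)).congr
    · intro s hs
      have := congrArg (fun φ : StrongDual ℝ X => φ v) (heq s hs)
      simp only [ContinuousLinearMap.smul_apply, smul_eq_mul] at this
      rw [hA] at this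
      linarith
    · have := congrArg (fun φ : StrongDual ℝ X => φ v) (heq t ht)
      simp only [ContinuousLinearMap.smul_apply, smul_eq_mul] at this
      rw [hA] at this
      linarith
  have hD : (inner ℝ (u' t) v : ℝ) - (1 * (F' u₀) (u t - u₀) v + t * ev ((F' u₀) (u' t))) - F u₀ v
      = 0 := by
    have h1 := cf.derivWithin (uniqueDiffOn_Ici 0 t ht)
    have h2 := cf0.derivWithin (uniqueDiffOn_Ici 0 t ht)
    rw [h1] at h2; exact h2
  have star : A t (u' t) v = F u₀ v + (F' u₀) (u t - u₀) v := by
    rw [hA]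
    have : ev ((F' u₀) (u' t)) = (F' u₀) (u' t) v := rfl
    rw [this] at hD
    linarith
  -- step 2: FTC for F ∘ u and for F' u₀ ∘ u
  have hIccIci : Icc (0:ℝ) t ⊆ Ici 0 := Icc_subset_Ici_self
  have I1 : ∫ s in (0:ℝ)..t, (F' (u s)) (u' s) v = F (u t) v - F u₀ v := by
    rw [← hu0]
    apply intervalIntegral.integral_eq_sub_of_hasDeriv_right_of_le ht
    · exact (ev.continuous.comp hFc).comp_continuousOn (hucont.mono hIccIci)
    · intro s hs
      have h := (hF (u s)).comp_hasDerivWithinAt s (hderiv s (le_of_lt hs.1))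
      have h2 := ev.hasFDerivAt.comp_hasDerivWithinAt s h
      exact (h2.mono (fun x (hx : x ∈ Ioi s) => le_of_lt (lt_trans hs.1 hx)))
    · -- integrability: integrand = (F'(u s)-F'(u₀))(u' s) v + F'(u₀)(u' s) v
      have hc : ContinuousOn (fun s => (F' (u s)) (u' s) v) (Ici 0) := by
        have h1 : ContinuousOn (fun s => ((F' (u s) - F' u₀) (u' s)) v) (Ici 0) :=
          ev.continuous.comp_continuousOn hcont
        have h2 : ContinuousOn (fun s => (F' u₀) (u' s) v) (Ici 0) :=
          (ev.comp (F' u₀)).continuous.comp_continuousOn hu'cont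
        have := h1.add h2
        simpa [ContinuousLinearMap.sub_apply, sub_add_cancel, Pi.add_def] using this
      exact (hc.mono (by rw [uIcc_of_le ht]; exact hIccIci)).intervalIntegrable
  have I2 : ∫ s in (0:ℝ)..t, (F' u₀) (u' s) v = (F' u₀) (u t - u₀) v := by
    have : (F' u₀) (u t - u₀) v = (F' u₀) (u t) v - (F' u₀) (u 0) v := by
      rw [hu0]; simp [map_sub]
    rw [this]
    apply intervalIntegral.integral_eq_sub_of_hasDeriv_right_of_le ht
    · exact ((ev.comp (F' u₀)).continuous).comp_continuousOn (hucont.mono hIccIci)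
    · intro s hs
      have h := (ev.comp (F' u₀)).hasFDerivAt.comp_hasDerivWithinAt s
        (hderiv s (le_of_lt hs.1))
      exact h.mono (fun x (hx : x ∈ Ioi s) => le_of_lt (lt_trans hs.1 hx))
    · exact (((ev.comp (F' u₀)).continuous.comp_continuousOn hu'cont).mono
        (by rw [uIcc_of_le ht]; exact hIccIci)).intervalIntegrable
  have hsplit : ∫ s in (0:ℝ)..t, (F' (u s) - F' u₀) (u' s) v
      = (∫ s in (0:ℝ)..t, (F' (u s)) (u' s) v) - ∫ s in (0:ℝ)..t, (F' u₀) (u' s) v := by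
    rw [← intervalIntegral.integral_sub]
    · simp [ContinuousLinearMap.sub_apply]
    · have hc : ContinuousOn (fun s => (F' (u s)) (u' s) v) (Ici 0) := by
        have h1 : ContinuousOn (fun s => ((F' (u s) - F' u₀) (u' s)) v) (Ici 0) :=
          ev.continuous.comp_continuousOn hcont
        have h2 : ContinuousOn (fun s => (F' u₀) (u' s) v) (Ici 0) :=
          (ev.comp (F' u₀)).continuous.comp_continuousOn hu'cont
        have := h1.add h2
        simpa [ContinuousLinearMap.sub_apply, sub_add_cancel, Pi.add_def] using this
      exact (hc.mono (by rw [uIcc_of_le ht]; exact hIccIci)).intervalIntegrable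
    · exact (((ev.comp (F' u₀)).continuous.comp_continuousOn hu'cont).mono
        (by rw [uIcc_of_le ht]; exact hIccIci)).intervalIntegrable
  rw [hsplit, I1, I2, star]
  ring
end

section
/- Let u : [0,∞) → X be a continuously differentiable path satisfying A[t;u₀](u(t) − u₀) = t F(u₀) in X' for all t ≥ 0, with u(0) = u₀. Suppose F is Fréchet differentiable with derivative F' satisfying the Lipschitz condition (A.2), and that (A.1) holds at u₀. Then for every t ≥ 0 one has t‖F(u(t))‖_{X'} ≤ ‖u(t) − u₀‖_X + L t ∫₀ᵗ ‖u(s) − u₀‖_X ‖u̇(s)‖_X ds. -/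
open NormedSpace Set intervalIntegral
open scoped RealInnerProductSpace

/-- Under (A.1) and (A.2), for the continuously differentiable path `u`
with `u(0) = u₀` satisfying `A[t;u₀](u(t) − u₀) = t F(u₀)` for all `t ≥ 0`, one has
`t‖F(u(t))‖ ≤ ‖u(t) − u₀‖ + L t ∫₀ᵗ ‖u(s) − u₀‖ ‖u̇(s)‖ ds` for all `t ≥ 0`. -/
theorem stmt_9 {X : Type*} [NormedAddCommGroup X] [InnerProductSpace ℝ X] [CompleteSpace X]
    (u₀ : X) (F : X → StrongDual ℝ X) (F' : X → (X →L[ℝ] StrongDual ℝ X))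
    (hF : ∀ x : X, HasFDerivAt F (F' x) x)
    (μ : ℝ) (hμ : 0 < μ)
    (hA1 : ∀ x : X, (F' u₀) x x ≤ -μ * ‖x‖ ^ 2)
    (L : ℝ) (hL : 0 ≤ L)
    (hA2 : ∀ x y : X, ‖F' x - F' y‖ ≤ L * ‖x - y‖)
    (A : ℝ → X →L[ℝ] StrongDual ℝ X)
    (hA : ∀ (t : ℝ) (x v : X), A t x v = ⟪x, v⟫ - t * (F' u₀) x v)
    (u u' : ℝ → X)
    (hderiv : ∀ t ∈ Ici (0 : ℝ), HasDerivWithinAt u (u' t) (Ici 0) t)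
    (hu'cont : ContinuousOn u' (Ici 0))
    (hu0 : u 0 = u₀)
    (heq : ∀ t ∈ Ici (0 : ℝ), A t (u t - u₀) = t • F u₀) :
    ∀ t ∈ Ici (0 : ℝ),
      t * ‖F (u t)‖ ≤ ‖u t - u₀‖ + L * t * ∫ s in (0 : ℝ)..t, ‖u s - u₀‖ * ‖u' s‖ := by
  intro t ht
  have ht0 : (0:ℝ) ≤ t := ht
  have hIcc : Icc (0:ℝ) t ⊆ Ici 0 := Icc_subset_Ici_self
  have hucont : ContinuousOn u (Ici 0) := fun s hs => (hderiv s hs).continuousWithinAt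
  have hF'cont : Continuous F' := by
    have : LipschitzWith ⟨L, hL⟩ F' := by
      apply LipschitzWith.of_dist_le_mul
      intro x y
      rw [dist_eq_norm, dist_eq_norm]; exact hA2 x y
    exact this.continuous
  have hu'int : IntervalIntegrable u' MeasureTheory.volume 0 t := by
    apply ContinuousOn.intervalIntegrable
    rw [uIcc_of_le ht0]
    exact hu'cont.mono hIcc
  -- derivative of u at interior points
  have hderivAt : ∀ x ∈ Ioo (0:ℝ) t, HasDerivAt u (u' x) x := fun x hx =>
    (hderiv x (le_of_lt hx.1)).hasDerivAt (Ici_mem_nhds hx.1)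
  -- FTC for u
  have hu_eq : (∫ s in (0:ℝ)..t, u' s) = u t - u₀ := by
    rw [← hu0]
    exact integral_eq_sub_of_hasDeriv_right_of_le ht0 (hucont.mono hIcc)
      (fun x hx => (hderivAt x hx).hasDerivWithinAt) hu'int
  -- continuity of integrand s ↦ F'(u s) (u' s)
  have hgcont : ContinuousOn (fun s => (F' (u s)) (u' s)) (Ici 0) :=
    ContinuousOn.clm_apply (hF'cont.comp_continuousOn hucont) hu'cont
  have hgint : IntervalIntegrable (fun s => (F' (u s)) (u' s)) MeasureTheory.volume 0 t := by
    apply ContinuousOn.intervalIntegrable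
    rw [uIcc_of_le ht0]
    exact hgcont.mono hIcc
  -- FTC for F ∘ u
  have hFcont : Continuous F := continuous_iff_continuousAt.2 fun x => (hF x).continuousAt
  have hFg_eq : (∫ s in (0:ℝ)..t, (F' (u s)) (u' s)) = F (u t) - F u₀ := by
    rw [← hu0]
    exact integral_eq_sub_of_hasDeriv_right_of_le ht0
      (hFcont.comp_continuousOn (hucont.mono hIcc))
      (fun x hx => ((hF (u x)).comp_hasDerivAt x (hderivAt x hx)).hasDerivWithinAt)
      hgint
  -- apply F' u₀ across the integral of u'
  have hcomm : (F' u₀) (u t - u₀) = ∫ s in (0:ℝ)..t, (F' u₀) (u' s) := by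
    rw [← hu_eq, ContinuousLinearMap.intervalIntegral_comp_comm _ hu'int]
  have hcint : IntervalIntegrable (fun s => (F' u₀) (u' s)) MeasureTheory.volume 0 t := by
    apply ContinuousOn.intervalIntegrable
    rw [uIcc_of_le ht0]
    exact (ContinuousOn.clm_apply continuousOn_const hu'cont).mono hIcc
  -- the structural identity from heq
  have h1 : t • F u₀ = innerSL ℝ (u t - u₀) - t • ((F' u₀) (u t - u₀)) := by
    rw [← heq t ht]
    ext v
    simp only [ContinuousLinearMap.sub_apply, ContinuousLinearMap.smul_apply, smul_eq_mul,
      innerSL_apply_apply, map_sub, inner_sub_left, hA]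
    ring
  have hkey : t • F (u t)
      = innerSL ℝ (u t - u₀)
        + t • (∫ s in (0:ℝ)..t, ((F' (u s)) (u' s) - (F' u₀) (u' s))) := by
    rw [intervalIntegral.integral_sub hgint hcint, hFg_eq, ← hcomm]
    rw [smul_sub, smul_sub, h1]
    abel
  -- norm estimates
  have hbound : ∀ s ∈ Icc (0:ℝ) t,
      ‖(F' (u s)) (u' s) - (F' u₀) (u' s)‖ ≤ L * (‖u s - u₀‖ * ‖u' s‖) := by
    intro s hs
    have h2 : ‖(F' (u s)) (u' s) - (F' u₀) (u' s)‖ ≤ ‖F' (u s) - F' u₀‖ * ‖u' s‖ := by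
      have := (F' (u s) - F' u₀).le_opNorm (u' s)
      simpa using this
    calc ‖(F' (u s)) (u' s) - (F' u₀) (u' s)‖ ≤ ‖F' (u s) - F' u₀‖ * ‖u' s‖ := h2
      _ ≤ (L * ‖u s - u₀‖) * ‖u' s‖ :=
          mul_le_mul_of_nonneg_right (hA2 (u s) u₀) (norm_nonneg _)
      _ = L * (‖u s - u₀‖ * ‖u' s‖) := by ring
  have hint1 : IntervalIntegrable (fun s => ‖(F' (u s)) (u' s) - (F' u₀) (u' s)‖)
      MeasureTheory.volume 0 t := by
    apply ContinuousOn.intervalIntegrable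
    rw [uIcc_of_le ht0]
    exact (((hgcont.sub (ContinuousOn.clm_apply continuousOn_const hu'cont)).norm).mono hIcc)
  have hint2 : IntervalIntegrable (fun s => L * (‖u s - u₀‖ * ‖u' s‖))
      MeasureTheory.volume 0 t := by
    apply ContinuousOn.intervalIntegrable
    rw [uIcc_of_le ht0]
    exact ((continuousOn_const.mul (((hucont.sub continuousOn_const).norm).mul
      hu'cont.norm)).mono hIcc)
  have hnorm_int : ‖∫ s in (0:ℝ)..t, ((F' (u s)) (u' s) - (F' u₀) (u' s))‖
      ≤ L * ∫ s in (0:ℝ)..t, ‖u s - u₀‖ * ‖u' s‖ := by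
    calc ‖∫ s in (0:ℝ)..t, ((F' (u s)) (u' s) - (F' u₀) (u' s))‖
        ≤ ∫ s in (0:ℝ)..t, ‖(F' (u s)) (u' s) - (F' u₀) (u' s)‖ :=
          intervalIntegral.norm_integral_le_integral_norm ht0
      _ ≤ ∫ s in (0:ℝ)..t, L * (‖u s - u₀‖ * ‖u' s‖) :=
          intervalIntegral.integral_mono_on ht0 hint1 hint2 hbound
      _ = L * ∫ s in (0:ℝ)..t, ‖u s - u₀‖ * ‖u' s‖ := by
          rw [← intervalIntegral.integral_const_mul]
  calc t * ‖F (u t)‖ = ‖t • F (u t)‖ := by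
        rw [norm_smul, Real.norm_eq_abs, abs_of_nonneg ht0]
    _ ≤ ‖innerSL ℝ (u t - u₀)‖
        + ‖t • (∫ s in (0:ℝ)..t, ((F' (u s)) (u' s) - (F' u₀) (u' s)))‖ := by
        rw [hkey]; exact norm_add_le _ _
    _ ≤ ‖u t - u₀‖ + t * (L * ∫ s in (0:ℝ)..t, ‖u s - u₀‖ * ‖u' s‖) := by
        gcongr
        · exact (innerSL_apply_norm (𝕜 := ℝ) (u t - u₀)).le
        · rw [norm_smul, Real.norm_eq_abs, abs_of_nonneg ht0]
          exact mul_le_mul_of_nonneg_left hnorm_int ht0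
    _ = ‖u t - u₀‖ + L * t * ∫ s in (0 : ℝ)..t, ‖u s - u₀‖ * ‖u' s‖ := by ring
end

section
/- Let u : [0,∞) → X be a differentiable path satisfying A[s;u₀](u(s) − u₀) = s F(u₀) in X' for all s ≥ 0, and suppose (A.1) holds at u₀. Then for every s ≥ 0 one has s ‖u(s) − u₀‖_X ‖u̇(s)‖_X ≤ (s²/(1 + sμ)³) ‖F(u₀)‖²_{X'}. -/
open NormedSpace Set
open scoped RealInnerProductSpace

private lemma stmt_10_aux (s μ a b c I F G H : ℝ) (hs : 0 < s) (hμ : 0 < μ)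
    (ha0 : 0 ≤ a) (hb0 : 0 ≤ b) (hc0 : 0 ≤ c)
    (key : s * b ^ 2 - s ^ 2 * F = I) (hcs : I ≤ a * b) (hF : F ≤ -μ * b ^ 2)
    (e2 : a ^ 2 - s * G = s * H) (hG : G ≤ -μ * a ^ 2) (hH : H ≤ c * a) :
    s * (a * b) ≤ s ^ 2 / (1 + s * μ) ^ 3 * c ^ 2 := by
  have ht : 0 < 1 + s * μ := by positivity
  have hb2 : s * (1 + s * μ) * b ^ 2 ≤ a * b := by
    nlinarith [mul_le_mul_of_nonneg_left hF (sq_nonneg s)]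
  have ha2 : (1 + s * μ) * a ^ 2 ≤ s * c * a := by
    nlinarith [mul_le_mul_of_nonneg_left hG hs.le, mul_le_mul_of_nonneg_left hH hs.le]
  rcases eq_or_lt_of_le ha0 with haz | hapos
  · rw [← haz]; simpa using (by positivity : (0:ℝ) ≤ s ^ 2 / (1 + s * μ) ^ 3 * c ^ 2)
  rcases eq_or_lt_of_le hb0 with hbz | hbpos
  · rw [← hbz]; simpa using (by positivity : (0:ℝ) ≤ s ^ 2 / (1 + s * μ) ^ 3 * c ^ 2)
  have h1' : s * (1 + s * μ) * b ≤ a := le_of_mul_le_mul_right (by nlinarith [hb2]) hbpos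
  have h2' : (1 + s * μ) * a ≤ s * c := le_of_mul_le_mul_right (by nlinarith [ha2]) hapos
  rw [div_mul_eq_mul_div, le_div_iff₀ (by positivity : (0:ℝ) < (1 + s * μ) ^ 3)]
  have P : (s * (1 + s * μ) * b) * ((1 + s * μ) * a) ≤ a * (s * c) :=
    mul_le_mul h1' h2' (by positivity) ha0
  nlinarith [mul_le_mul_of_nonneg_left P ht.le,
    mul_le_mul_of_nonneg_left h2' (by positivity : (0:ℝ) ≤ s * c)]

/-- Under (A.1), for the differentiable path `u` satisfying
`A[s;u₀](u(s) − u₀) = s F(u₀)` for all `s ≥ 0`, one has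
`s ‖u(s) − u₀‖ ‖u̇(s)‖ ≤ (s²/(1 + sμ)³) ‖F(u₀)‖²` for every `s ≥ 0`. -/
theorem stmt_10 {X : Type*} [NormedAddCommGroup X] [InnerProductSpace ℝ X] [CompleteSpace X]
    (u₀ : X) (Fu₀ : StrongDual ℝ X) (F'u₀ : X →L[ℝ] StrongDual ℝ X)
    (μ : ℝ) (hμ : 0 < μ)
    (hA1 : ∀ x : X, F'u₀ x x ≤ -μ * ‖x‖ ^ 2)
    (A : ℝ → X →L[ℝ] StrongDual ℝ X)
    (hA : ∀ (s : ℝ) (x v : X), A s x v = ⟪x, v⟫ - s * F'u₀ x v)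
    (u u' : ℝ → X)
    (hderiv : ∀ s ∈ Ici (0 : ℝ), HasDerivWithinAt u (u' s) (Ici 0) s)
    (heq : ∀ s ∈ Ici (0 : ℝ), A s (u s - u₀) = s • Fu₀) :
    ∀ s ∈ Ici (0 : ℝ),
      s * (‖u s - u₀‖ * ‖u' s‖) ≤ s ^ 2 / (1 + s * μ) ^ 3 * ‖Fu₀‖ ^ 2 := by
  have hval : ∀ t ∈ Ici (0:ℝ), ∀ v : X,
      ⟪u t - u₀, v⟫ - t * F'u₀ (u t - u₀) v = t * Fu₀ v := by
    intro t ht v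
    have h := DFunLike.congr_fun (heq t ht) v
    rw [hA t (u t - u₀) v] at h
    simpa using h
  intro s hs
  rcases eq_or_lt_of_le (mem_Ici.mp hs) with h0 | hspos
  · rw [← h0]; simp
  -- derivative of the equation
  have hw' : HasDerivWithinAt (fun t => u t - u₀) (u' s) (Ici 0) s :=
    (hderiv s hs).sub_const u₀
  have h1 : HasDerivWithinAt (fun t => (innerSL ℝ (u t - u₀) : StrongDual ℝ X))
      (innerSL ℝ (u' s)) (Ici 0) s :=
    (innerSL ℝ).hasFDerivAt.comp_hasDerivWithinAt s hw'
  have h2 : HasDerivWithinAt (fun t => F'u₀ (u t - u₀)) (F'u₀ (u' s)) (Ici 0) s :=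
    F'u₀.hasFDerivAt.comp_hasDerivWithinAt s hw'
  have h3 : HasDerivWithinAt (fun t : ℝ => t • F'u₀ (u t - u₀))
      (s • F'u₀ (u' s) + (1:ℝ) • F'u₀ (u s - u₀)) (Ici 0) s :=
    (hasDerivWithinAt_id s (Ici 0)).smul h2
  have hΦ : HasDerivWithinAt
      (fun t => (innerSL ℝ (u t - u₀) : StrongDual ℝ X) - t • F'u₀ (u t - u₀))
      (innerSL ℝ (u' s) - (s • F'u₀ (u' s) + (1:ℝ) • F'u₀ (u s - u₀))) (Ici 0) s :=
    h1.sub h3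
  have hΦeq : ∀ t ∈ Ici (0:ℝ),
      (innerSL ℝ (u t - u₀) : StrongDual ℝ X) - t • F'u₀ (u t - u₀) = t • Fu₀ := by
    intro t ht
    ext v
    simp only [ContinuousLinearMap.sub_apply, ContinuousLinearMap.smul_apply,
      innerSL_apply_apply, smul_eq_mul]
    exact hval t ht v
  have hR : HasDerivWithinAt (fun t : ℝ => t • Fu₀)
      (innerSL ℝ (u' s) - (s • F'u₀ (u' s) + (1:ℝ) • F'u₀ (u s - u₀))) (Ici 0) s :=
    hΦ.congr (fun t ht => (hΦeq t ht).symm) ((hΦeq s hs).symm)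
  have hR' : HasDerivWithinAt (fun t : ℝ => t • Fu₀) Fu₀ (Ici 0) s := by
    simpa using ((hasDerivAt_id s).smul_const Fu₀).hasDerivWithinAt
  have hud : UniqueDiffWithinAt ℝ (Ici (0:ℝ)) s := uniqueDiffOn_Ici 0 s hs
  have hkey : (innerSL ℝ (u' s) : StrongDual ℝ X)
      - (s • F'u₀ (u' s) + (1:ℝ) • F'u₀ (u s - u₀)) = Fu₀ :=
    (hR.derivWithin hud).symm.trans (hR'.derivWithin hud)
  set w := u s - u₀ with hwdef
  have hkeyv : ⟪u' s, u' s⟫ - (s * F'u₀ (u' s) (u' s) + F'u₀ w (u' s)) = Fu₀ (u' s) := by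
    have := DFunLike.congr_fun hkey (u' s)
    simpa using this
  have e1 := hval s hs (u' s)
  have e2 := hval s hs w
  rw [← hwdef] at e1 e2
  have key : s * ‖u' s‖ ^ 2 - s ^ 2 * F'u₀ (u' s) (u' s) = ⟪w, u' s⟫ := by
    rw [← real_inner_self_eq_norm_sq]
    linear_combination s * hkeyv - e1
  have e2' : ‖w‖ ^ 2 - s * F'u₀ w w = s * Fu₀ w := by
    rw [← real_inner_self_eq_norm_sq]; linear_combination e2
  exact stmt_10_aux s μ ‖w‖ ‖u' s‖ ‖Fu₀‖ ⟪w, u' s⟫ (F'u₀ (u' s) (u' s)) (F'u₀ w w)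
    (Fu₀ w) hspos hμ (norm_nonneg _) (norm_nonneg _) (norm_nonneg _)
    key (real_inner_le_norm w (u' s)) (hA1 (u' s)) e2' (hA1 w)
    (le_trans (le_abs_self _) (Fu₀.le_opNorm w))
end

section
/- (Residual reduction theorem.) Let u : [0,∞) → X be a continuously differentiable path with u(0) = u₀ satisfying A[t;u₀](u(t) − u₀) = t F(u₀) in X' for all t ≥ 0. Suppose F is Fréchet differentiable with derivative F' satisfying (A.2), and that (A.1) holds at u₀. Then for every t ≥ 0 one has ‖F(u(t))‖_{X'} ≤ γ(t) ‖F(u₀)‖_{X'}, where γ(t) := (1/(1 + tμ)) · (1 + (L t²/(2(1 + tμ))) ‖F(u₀)‖_{X'}). -/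
open NormedSpace Set intervalIntegral

lemma taylor_half {X : Type*} [NormedAddCommGroup X] [NormedSpace ℝ X]
    {Y : Type*} [NormedAddCommGroup Y] [NormedSpace ℝ Y] [CompleteSpace Y]
    (F : X → Y) (F' : X → (X →L[ℝ] Y)) (hF : ∀ x, HasFDerivAt F (F' x) x)
    (L : ℝ) (hL : 0 ≤ L) (hA2 : ∀ x y : X, ‖F' x - F' y‖ ≤ L * ‖x - y‖)
    (x y : X) : ‖F y - F x - F' x (y - x)‖ ≤ L / 2 * ‖y - x‖ ^ 2 := by
  set e := y - x with he
  have hF'cont : Continuous F' := by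
    refine (LipschitzWith.of_dist_le_mul (K := L.toNNReal) fun a b => ?_).continuous
    rw [dist_eq_norm, dist_eq_norm]
    refine (hA2 a b).trans (mul_le_mul_of_nonneg_right ?_ (norm_nonneg _))
    exact Real.le_coe_toNNReal L
  have hderiv : ∀ s : ℝ, HasDerivAt (fun s : ℝ => F (x + s • e))
      ((F' (x + s • e)) e) s := by
    intro s
    have h1 : HasDerivAt (fun s : ℝ => x + s • e) e s := by
      simpa using ((hasDerivAt_id s).smul_const e).const_add x
    exact (hF (x + s • e)).comp_hasDerivAt s h1
  have hcont : Continuous fun s : ℝ => (F' (x + s • e)) e := by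
    have h2 : Continuous fun s : ℝ => F' (x + s • e) :=
      hF'cont.comp (by continuity)
    exact (ContinuousLinearMap.apply ℝ Y e).continuous.comp h2
  have hint : IntervalIntegrable (fun s : ℝ => (F' (x + s • e)) e)
      MeasureTheory.volume 0 1 := hcont.intervalIntegrable 0 1
  have hFTC : ∫ s in (0:ℝ)..1, (F' (x + s • e)) e = F y - F x := by
    have := integral_eq_sub_of_hasDerivAt (f := fun s : ℝ => F (x + s • e))
      (fun s _ => hderiv s) hint
    simpa [he] using this
  have hsplit : F y - F x - F' x e
      = ∫ s in (0:ℝ)..1, ((F' (x + s • e)) e - (F' x) e) := by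
    rw [intervalIntegral.integral_sub hint intervalIntegrable_const, hFTC]
    simp
  rw [hsplit]
  have hgint : IntervalIntegrable (fun s : ℝ => L * ‖e‖ ^ 2 * s)
      MeasureTheory.volume 0 1 := (by continuity : Continuous fun s : ℝ => L * ‖e‖^2 * s).intervalIntegrable 0 1
  have hbound : ‖∫ s in (0:ℝ)..1, ((F' (x + s • e)) e - (F' x) e)‖
      ≤ |∫ s in (0:ℝ)..1, L * ‖e‖ ^ 2 * s| := by
    refine intervalIntegral.norm_integral_le_abs_of_norm_le ?_ hgint
    rw [MeasureTheory.ae_restrict_iff' measurableSet_uIoc]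
    refine MeasureTheory.ae_of_all _ fun s hs => ?_
    rw [Set.uIoc_of_le zero_le_one] at hs
    have h1 : ‖(F' (x + s • e)) e - (F' x) e‖
        ≤ ‖F' (x + s • e) - F' x‖ * ‖e‖ := by
      simpa using (F' (x + s • e) - F' x).le_opNorm e
    refine h1.trans ?_
    have h2 : ‖F' (x + s • e) - F' x‖ ≤ L * (s * ‖e‖) := by
      have := hA2 (x + s • e) x
      simpa [norm_smul, abs_of_nonneg hs.1.le] using this
    calc ‖F' (x + s • e) - F' x‖ * ‖e‖ ≤ L * (s * ‖e‖) * ‖e‖ :=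
          mul_le_mul_of_nonneg_right h2 (norm_nonneg e)
      _ = L * ‖e‖ ^ 2 * s := by ring
  refine hbound.trans ?_
  have : ∫ s in (0:ℝ)..1, L * ‖e‖ ^ 2 * s = L / 2 * ‖e‖ ^ 2 := by
    rw [intervalIntegral.integral_const_mul]
    simp [integral_id]
    ring
  rw [this, abs_of_nonneg (by positivity)]

open scoped RealInnerProductSpace

/-- Residual reduction theorem: Under (A.1) and (A.2), for the
continuously differentiable path `u` with `u(0) = u₀` satisfying
`A[t;u₀](u(t) − u₀) = t F(u₀)` for all `t ≥ 0`, one has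
`‖F(u(t))‖ ≤ γ(t) ‖F(u₀)‖` with
`γ(t) = (1/(1 + tμ)) (1 + (L t²/(2(1 + tμ))) ‖F(u₀)‖)`. -/
theorem stmt_11 {X : Type*} [NormedAddCommGroup X] [InnerProductSpace ℝ X] [CompleteSpace X]
    (u₀ : X) (F : X → StrongDual ℝ X) (F' : X → (X →L[ℝ] StrongDual ℝ X))
    (hF : ∀ x : X, HasFDerivAt F (F' x) x)
    (μ : ℝ) (hμ : 0 < μ)
    (hA1 : ∀ x : X, (F' u₀) x x ≤ -μ * ‖x‖ ^ 2)
    (L : ℝ) (hL : 0 ≤ L)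
    (hA2 : ∀ x y : X, ‖F' x - F' y‖ ≤ L * ‖x - y‖)
    (A : ℝ → X →L[ℝ] StrongDual ℝ X)
    (hA : ∀ (t : ℝ) (x v : X), A t x v = ⟪x, v⟫ - t * (F' u₀) x v)
    (u u' : ℝ → X)
    (hderiv : ∀ t ∈ Ici (0 : ℝ), HasDerivWithinAt u (u' t) (Ici 0) t)
    (hu'cont : ContinuousOn u' (Ici 0))
    (hu0 : u 0 = u₀)
    (heq : ∀ t ∈ Ici (0 : ℝ), A t (u t - u₀) = t • F u₀) :
    ∀ t ∈ Ici (0 : ℝ),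
      ‖F (u t)‖ ≤
        1 / (1 + t * μ) * (1 + L * t ^ 2 / (2 * (1 + t * μ)) * ‖F u₀‖) * ‖F u₀‖ := by
  intro t ht
  rcases eq_or_lt_of_le (mem_Ici.mp ht) with h0 | htpos
  · rw [← h0]
    simp [hu0]
  set N := ‖F u₀‖ with hN
  have hN0 : 0 ≤ N := norm_nonneg _
  set e := u t - u₀ with he
  set D := 1 + t * μ with hD
  have hD1 : (1:ℝ) ≤ D := by nlinarith
  have hDpos : 0 < D := by linarith
  -- the key pointwise identity
  have key : ∀ v : X, ⟪e, v⟫ - t * (F' u₀) e v = t * F u₀ v := by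
    intro v
    have h1 := heq t ht
    have h2 := congrArg (fun φ : StrongDual ℝ X => φ v) h1
    simp only [ContinuousLinearMap.smul_apply, smul_eq_mul] at h2
    rw [← hA t e v]
    exact h2
  -- step 1: bound on ‖e‖
  have h1 : D * ‖e‖ ^ 2 ≤ t * (N * ‖e‖) := by
    have hk := key e
    have hself : ⟪e, e⟫ = ‖e‖ ^ 2 := real_inner_self_eq_norm_sq e
    have hFe : F u₀ e ≤ N * ‖e‖ := by
      calc F u₀ e ≤ |F u₀ e| := le_abs_self _
        _ = ‖F u₀ e‖ := (Real.norm_eq_abs _).symm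
        _ ≤ N * ‖e‖ := (F u₀).le_opNorm e
    have hA1e := hA1 e
    nlinarith [htpos]
  have hbe : ‖e‖ ≤ t * N / D := by
    rcases (eq_or_lt_of_le (norm_nonneg e)).imp Eq.symm id with hz | hz
    · rw [hz]
      positivity
    · rw [le_div_iff₀ hDpos]
      nlinarith
  -- step 2: residual identity bound
  have h2 : ‖F u₀ + (F' u₀) e‖ ≤ ‖e‖ / t := by
    refine ContinuousLinearMap.opNorm_le_bound _ (by positivity) fun v => ?_
    have hv : t * ((F u₀ + (F' u₀) e) v) = ⟪e, v⟫ := by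
      have := key v
      simp only [ContinuousLinearMap.add_apply]
      linarith
    have habs : |(F u₀ + (F' u₀) e) v| = |⟪e, v⟫| / t := by
      rw [← hv, abs_mul, abs_of_pos htpos, mul_div_cancel_left₀ _ (ne_of_gt htpos)]
    rw [Real.norm_eq_abs, habs, div_mul_eq_mul_div, div_le_div_iff₀ htpos htpos]
    have := abs_real_inner_le_norm e v
    nlinarith [abs_nonneg ⟪e, v⟫]
  -- step 3: Taylor
  have h3 : ‖F (u t) - F u₀ - (F' u₀) e‖ ≤ L / 2 * ‖e‖ ^ 2 := by
    simpa [he] using taylor_half F F' hF L hL hA2 u₀ (u t)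
  -- combine
  have h4 : ‖F (u t)‖ ≤ ‖e‖ / t + L / 2 * ‖e‖ ^ 2 := by
    calc ‖F (u t)‖
        = ‖(F u₀ + (F' u₀) e) + (F (u t) - F u₀ - (F' u₀) e)‖ := by congr 1; abel
      _ ≤ ‖F u₀ + (F' u₀) e‖ + ‖F (u t) - F u₀ - (F' u₀) e‖ := norm_add_le _ _
      _ ≤ ‖e‖ / t + L / 2 * ‖e‖ ^ 2 := add_le_add h2 h3
  have hb1 : ‖e‖ / t ≤ N / D := by
    rw [div_le_div_iff₀ htpos hDpos]
    calc ‖e‖ * D ≤ t * N / D * D := mul_le_mul_of_nonneg_right hbe hDpos.le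
      _ = N * t := by field_simp
  have hb2 : L / 2 * ‖e‖ ^ 2 ≤ L / 2 * (t * N / D) ^ 2 := by
    refine mul_le_mul_of_nonneg_left ?_ (by positivity)
    exact pow_le_pow_left₀ (norm_nonneg e) hbe 2
  have hfinal : N / D + L / 2 * (t * N / D) ^ 2
      = 1 / D * (1 + L * t ^ 2 / (2 * D) * N) * N := by
    field_simp
  calc ‖F (u t)‖ ≤ ‖e‖ / t + L / 2 * ‖e‖ ^ 2 := h4
    _ ≤ N / D + L / 2 * (t * N / D) ^ 2 := add_le_add hb1 hb2
    _ = 1 / D * (1 + L * t ^ 2 / (2 * D) * N) * N := hfinal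
end

section
/- Let μ > 0, L ≥ 0, R ≥ 0 be real numbers with (L/2)R ≤ μ². Then for every t > 0 the reduction factor satisfies γ(t) := (1/(1 + tμ)) · (1 + (L t² R)/(2(1 + tμ))) < 1. -/
/-- If `μ > 0`, `L ≥ 0`, `R ≥ 0` with `(L/2)R ≤ μ²`, then for every
`t > 0` one has `γ(t) = (1/(1 + tμ)) (1 + (L t² R)/(2(1 + tμ))) < 1`. -/
theorem stmt_13 (μ L R : ℝ) (hμ : 0 < μ) (hL : 0 ≤ L) (hR : 0 ≤ R)
    (h : L / 2 * R ≤ μ ^ 2) :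
    ∀ t : ℝ, 0 < t → 1 / (1 + t * μ) * (1 + L * t ^ 2 * R / (2 * (1 + t * μ))) < 1 := by
  intro t ht
  have hs : 0 < 1 + t * μ := by nlinarith
  rw [div_mul_eq_mul_div, one_mul, div_lt_one hs]
  have : L * t ^ 2 * R / (2 * (1 + t * μ)) < t * μ := by
    rw [div_lt_iff₀ (by positivity)]
    nlinarith [mul_pos ht hμ, sq_nonneg t]
  linarith
end

section
/- Let μ > 0, L > 0, R > 0 be real numbers with L·R > μ². Then the function γ(t) := (1/(1 + tμ)) · (1 + (L t² R)/(2(1 + tμ))) on (0,∞) attains its minimum at t⋆ = μ/(L·R − μ²); that is, γ(t⋆) ≤ γ(t) for all t > 0. -/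
/-- If `μ > 0`, `L > 0`, `R > 0` with `LR > μ²`, then
`γ(t) = (1/(1 + tμ)) (1 + (L t² R)/(2(1 + tμ)))` attains its minimum on `(0,∞)` at
`t⋆ = μ/(LR − μ²)`; i.e. `γ(t⋆) ≤ γ(t)` for all `t > 0`. -/
theorem stmt_14 (μ L R : ℝ) (hμ : 0 < μ) (hL : 0 < L) (hR : 0 < R)
    (h : μ ^ 2 < L * R) :
    ∀ t : ℝ, 0 < t →
      (fun s : ℝ => 1 / (1 + s * μ) * (1 + L * s ^ 2 * R / (2 * (1 + s * μ))))
          (μ / (L * R - μ ^ 2)) ≤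
        (fun s : ℝ => 1 / (1 + s * μ) * (1 + L * s ^ 2 * R / (2 * (1 + s * μ)))) t := by
  intro t ht
  simp only
  have hD : 0 < L * R - μ ^ 2 := by linarith
  have ha : 0 < 1 + t * μ := by positivity
  have hb : 0 < 1 + μ / (L * R - μ ^ 2) * μ := by positivity
  field_simp
  nlinarith [mul_nonneg (mul_nonneg (mul_nonneg hD.le hD.le) hD.le) (sq_nonneg (μ - (L * R - μ ^ 2) * t)),
    mul_nonneg (mul_nonneg hD.le hD.le) (sq_nonneg (μ - (L * R - μ ^ 2) * t)),
    mul_pos hD hD, mul_pos (mul_pos hD hD) hD, mul_pos hμ hμ, mul_pos (mul_pos hL hR) hD,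
    sq_nonneg (μ - (L * R - μ ^ 2) * t), mul_pos ha ha, mul_pos ht hμ]
end

section
/- Suppose (A.1) holds at u₀ with constant μ > 0, there is L > 0 with L‖F(u₀)‖_{X'} > μ², and set t⋆ = μ/(L‖F(u₀)‖_{X'} − μ²). If u(t⋆) ∈ X satisfies A[t⋆;u₀](u(t⋆) − u₀) = t⋆ F(u₀) in X', and δ := (u(t⋆) − u₀)/t⋆ is nonzero, then t⋆ ≤ μ/(L‖δ‖_X). -/
open NormedSpace
open scoped RealInnerProductSpace

set_option maxHeartbeats 1000000 in
/-- Under (A.1) with `μ > 0` and `L > 0` with `L‖F(u₀)‖ > μ²`, set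
`t⋆ = μ/(L‖F(u₀)‖ − μ²)`. If `u(t⋆)` solves `A[t⋆;u₀](u(t⋆) − u₀) = t⋆ F(u₀)` and
`δ = (u(t⋆) − u₀)/t⋆ ≠ 0`, then `t⋆ ≤ μ/(L‖δ‖)`. -/
theorem stmt_16 {X : Type*} [NormedAddCommGroup X] [InnerProductSpace ℝ X] [CompleteSpace X]
    (u₀ : X) (Fu₀ : StrongDual ℝ X) (F'u₀ : X →L[ℝ] StrongDual ℝ X)
    (A : ℝ → X →L[ℝ] StrongDual ℝ X)
    (hA : ∀ (t : ℝ) (x v : X), A t x v = ⟪x, v⟫ - t * F'u₀ x v)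
    (μ : ℝ) (hμ : 0 < μ)
    (hA1 : ∀ x : X, F'u₀ x x ≤ -μ * ‖x‖ ^ 2)
    (L : ℝ) (hL : 0 < L) (hLF : μ ^ 2 < L * ‖Fu₀‖)
    (u : X) (δ : X)
    (hu : A (μ / (L * ‖Fu₀‖ - μ ^ 2)) (u - u₀) = (μ / (L * ‖Fu₀‖ - μ ^ 2)) • Fu₀)
    (hδ : δ = (μ / (L * ‖Fu₀‖ - μ ^ 2))⁻¹ • (u - u₀)) (hδ0 : δ ≠ 0) :
    μ / (L * ‖Fu₀‖ - μ ^ 2) ≤ μ / (L * ‖δ‖) := by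
  set D := L * ‖Fu₀‖ - μ ^ 2 with hDdef
  have hD : 0 < D := by simp only [hDdef]; linarith
  have ht : 0 < μ / D := div_pos hμ hD
  set t := μ / D with htdef
  have hδn : 0 < ‖δ‖ := norm_pos_iff.mpr hδ0
  have hFpos : 0 < ‖Fu₀‖ := by
    by_contra h
    push_neg at h
    nlinarith [norm_nonneg Fu₀]
  have hw : u - u₀ = t • δ := by
    rw [hδ, smul_smul, mul_inv_cancel₀ ht.ne', one_smul]
  have key := congrArg (fun φ : StrongDual ℝ X => φ (u - u₀)) hu
  simp only [hA, ContinuousLinearMap.smul_apply, smul_eq_mul] at key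
  have hinner : ⟪u - u₀, u - u₀⟫ = ‖u - u₀‖ ^ 2 := real_inner_self_eq_norm_sq _
  have hF'le := hA1 (u - u₀)
  have hFle : Fu₀ (u - u₀) ≤ ‖Fu₀‖ * ‖u - u₀‖ :=
    le_trans (le_abs_self _) (Fu₀.le_opNorm _)
  have hnw : ‖u - u₀‖ = t * ‖δ‖ := by
    rw [hw, norm_smul, Real.norm_eq_abs, abs_of_pos ht]
  -- (1 + tμ)‖w‖² ≤ t‖F‖‖w‖
  have h1 : (1 + t * μ) * ‖u - u₀‖ ^ 2 ≤ t * (‖Fu₀‖ * ‖u - u₀‖) := by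
    nlinarith [key, hinner, hF'le, hFle, ht]
  rw [hnw] at h1
  -- divide by t²‖δ‖ : (1 + tμ)‖δ‖ ≤ ‖F‖
  have h2 : (1 + t * μ) * ‖δ‖ ≤ ‖Fu₀‖ := by
    have ht2 : 0 < t * t * ‖δ‖ := by positivity
    nlinarith [h1]
  have htD : t * D = μ := by
    rw [htdef, div_mul_cancel₀ μ hD.ne']
  have hLd : L * ‖δ‖ ≤ D := by
    have hmul : D * ((1 + t * μ) * ‖δ‖) ≤ D * ‖Fu₀‖ :=
      mul_le_mul_of_nonneg_left h2 hD.le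
    have hDt : D * (t * μ) = μ ^ 2 := by
      rw [show D * (t * μ) = (t * D) * μ by ring, htD]; ring
    have hexp : D * ((1 + t * μ) * ‖δ‖) = (D + μ ^ 2) * ‖δ‖ := by
      rw [← hDt]; ring
    rw [hexp] at hmul
    have hDμ : D + μ ^ 2 = L * ‖Fu₀‖ := by simp [hDdef]
    rw [hDμ] at hmul
    have hmul' : (L * ‖δ‖) * ‖Fu₀‖ ≤ D * ‖Fu₀‖ := by
      calc (L * ‖δ‖) * ‖Fu₀‖ = L * ‖Fu₀‖ * ‖δ‖ := by ring
        _ ≤ D * ‖Fu₀‖ := hmul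
    exact le_of_mul_le_mul_right hmul' hFpos
  rw [htdef]
  gcongr
end

section
/- Suppose (A.1) holds at u₀ with constant μ > 0. Let k > 0 and let δ ∈ X, δ ≠ 0, satisfy the PTC update equation (δ, v)_X − k⟨F'(u₀)δ, v⟩ = ⟨F(u₀), v⟩ for all v ∈ X. Then the computable quantity μ̂ := (⟨F(u₀), δ⟩ − ‖δ‖²_X)/(k‖δ‖²_X) satisfies μ̂ ≥ μ; in particular μ̂ > 0. -/
open NormedSpace
open scoped RealInnerProductSpace

/-- Under (A.1) with `μ > 0`, if `k > 0` and `δ ≠ 0` satisfies the PTC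
update equation `(δ, v)_X − k⟨F'(u₀)δ, v⟩ = ⟨F(u₀), v⟩` for all `v`, then
`μ̂ = (⟨F(u₀), δ⟩ − ‖δ‖²)/(k‖δ‖²)` satisfies `μ̂ ≥ μ`; in particular `μ̂ > 0`. -/
theorem stmt_17 {X : Type*} [NormedAddCommGroup X] [InnerProductSpace ℝ X] [CompleteSpace X]
    (u₀ : X) (Fu₀ : StrongDual ℝ X) (F'u₀ : X →L[ℝ] StrongDual ℝ X)
    (μ : ℝ) (hμ : 0 < μ)
    (hA1 : ∀ x : X, F'u₀ x x ≤ -μ * ‖x‖ ^ 2)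
    (k : ℝ) (hk : 0 < k) (δ : X) (hδ0 : δ ≠ 0)
    (hupdate : ∀ v : X, ⟪δ, v⟫ - k * F'u₀ δ v = Fu₀ v) :
    μ ≤ (Fu₀ δ - ‖δ‖ ^ 2) / (k * ‖δ‖ ^ 2) ∧
      0 < (Fu₀ δ - ‖δ‖ ^ 2) / (k * ‖δ‖ ^ 2) := by
  have hn : (0:ℝ) < ‖δ‖ ^ 2 := pow_pos (norm_pos_iff.mpr hδ0) 2
  have hd : (0:ℝ) < k * ‖δ‖ ^ 2 := by positivity
  have h1 := hupdate δ
  rw [real_inner_self_eq_norm_sq] at h1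
  have h2 : Fu₀ δ - ‖δ‖ ^ 2 = -(k * F'u₀ δ δ) := by linarith
  have h3 : μ ≤ (Fu₀ δ - ‖δ‖ ^ 2) / (k * ‖δ‖ ^ 2) := by
    rw [le_div_iff₀ hd, h2]
    have := hA1 δ
    nlinarith
  exact ⟨h3, lt_of_lt_of_le hμ h3⟩
end

section
/- Let u : [0,∞) → X be a continuously differentiable path with u(0) = u₀ satisfying A[s;u₀](u(s) − u₀) = s F(u₀) in X' for all s ≥ 0, where F is Fréchet differentiable with derivative F'. Fix t > 0 and set δ := (u(t) − u₀)/t. Then ⟨F(u(t)), δ⟩ = ‖δ‖²_X + ∫₀ᵗ ⟨(F'(u(s)) − F'(u₀)) u̇(s), δ⟩ ds. -/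
open NormedSpace Set intervalIntegral
open scoped RealInnerProductSpace

/-- For a continuously differentiable path `u` with `u(0) = u₀`
satisfying `A[s;u₀](u(s) − u₀) = s F(u₀)` for all `s ≥ 0`, with `F` Fréchet
differentiable, fixing `t > 0` and `δ = (u(t) − u₀)/t`, one has
`⟨F(u(t)), δ⟩ = ‖δ‖² + ∫₀ᵗ ⟨(F'(u(s)) − F'(u₀)) u̇(s), δ⟩ ds`. -/
theorem stmt_18 {X : Type*} [NormedAddCommGroup X] [InnerProductSpace ℝ X] [CompleteSpace X]
    (u₀ : X) (F : X → StrongDual ℝ X) (F' : X → (X →L[ℝ] StrongDual ℝ X))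
    (hF : ∀ x : X, HasFDerivAt F (F' x) x)
    (A : ℝ → X →L[ℝ] StrongDual ℝ X)
    (hA : ∀ (s : ℝ) (x v : X), A s x v = ⟪x, v⟫ - s * (F' u₀) x v)
    (u u' : ℝ → X)
    (hderiv : ∀ s ∈ Ici (0 : ℝ), HasDerivWithinAt u (u' s) (Ici 0) s)
    (hu'cont : ContinuousOn u' (Ici 0))
    (hu0 : u 0 = u₀)
    (heq : ∀ s ∈ Ici (0 : ℝ), A s (u s - u₀) = s • F u₀)
    (t : ℝ) (ht : 0 < t) (δ : X) (hδ : δ = t⁻¹ • (u t - u₀))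
    (hcont : ContinuousOn (fun s => (F' (u s) - F' u₀) (u' s) δ) (Icc 0 t)) :
    F (u t) δ = ‖δ‖ ^ 2 + ∫ s in (0 : ℝ)..t, (F' (u s) - F' u₀) (u' s) δ := by
  have ht0 : (0:ℝ) ≤ t := ht.le
  have hIcc : Icc (0:ℝ) t ⊆ Ici 0 := fun x hx => hx.1
  -- derivatives
  have hd1 : ∀ s ∈ Ici (0:ℝ), HasDerivWithinAt (fun s => F (u s) δ)
      (F' (u s) (u' s) δ) (Ici 0) s := by
    intro s hs
    have h := ((ContinuousLinearMap.apply ℝ ℝ δ).hasFDerivAt.comp (u s)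
      (hF (u s))).comp_hasDerivWithinAt s (hderiv s hs)
    exact h
  have hd2 : ∀ s ∈ Ici (0:ℝ), HasDerivWithinAt (fun s => F' u₀ (u s) δ)
      (F' u₀ (u' s) δ) (Ici 0) s := by
    intro s hs
    have h := (((ContinuousLinearMap.apply ℝ ℝ δ).comp (F' u₀)).hasFDerivAt).comp_hasDerivWithinAt
      s (hderiv s hs)
    exact h
  -- continuity / integrability
  have c2 : ContinuousOn (fun s => F' u₀ (u' s) δ) (Icc 0 t) :=
    (((ContinuousLinearMap.apply ℝ ℝ δ).comp (F' u₀)).continuous.comp_continuousOn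
      (hu'cont.mono hIcc))
  have c1 : ContinuousOn (fun s => F' (u s) (u' s) δ) (Icc 0 t) := by
    have : (fun s => F' (u s) (u' s) δ)
        = fun s => ((F' (u s) - F' u₀) (u' s) δ) + F' u₀ (u' s) δ := by
      funext s; simp
    rw [this]
    exact hcont.add c2
  have uIcc_eq : uIcc (0:ℝ) t = Icc 0 t := uIcc_of_le ht0
  have int1 : IntervalIntegrable (fun s => F' (u s) (u' s) δ) MeasureTheory.volume 0 t :=
    (ContinuousOn.intervalIntegrable (by rw [uIcc_eq]; exact c1))
  have int2 : IntervalIntegrable (fun s => F' u₀ (u' s) δ) MeasureTheory.volume 0 t :=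
    (ContinuousOn.intervalIntegrable (by rw [uIcc_eq]; exact c2))
  -- FTC
  have ftc1 : ∫ s in (0:ℝ)..t, F' (u s) (u' s) δ = F (u t) δ - F (u 0) δ :=
    intervalIntegral.integral_eq_sub_of_hasDeriv_right_of_le ht0
      (fun s hs => ((hd1 s hs.1).continuousWithinAt).mono hIcc)
      (fun s hs => (hd1 s hs.1.le).mono (fun x hx => (hs.1.trans hx).le)) int1
  have ftc2 : ∫ s in (0:ℝ)..t, F' u₀ (u' s) δ = F' u₀ (u t) δ - F' u₀ (u 0) δ :=
    intervalIntegral.integral_eq_sub_of_hasDeriv_right_of_le ht0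
      (fun s hs => ((hd2 s hs.1).continuousWithinAt).mono hIcc)
      (fun s hs => (hd2 s hs.1.le).mono (fun x hx => (hs.1.trans hx).le)) int2
  have intsplit : ∫ s in (0:ℝ)..t, (F' (u s) - F' u₀) (u' s) δ
      = (∫ s in (0:ℝ)..t, F' (u s) (u' s) δ) - ∫ s in (0:ℝ)..t, F' u₀ (u' s) δ := by
    have e : (fun s => (F' (u s) - F' u₀) (u' s) δ)
        = fun s => F' (u s) (u' s) δ - F' u₀ (u' s) δ := by funext s; simp
    rw [e, intervalIntegral.integral_sub int1 int2]
  -- algebraic identity from heq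
  have hut : u t - u₀ = t • δ := by
    rw [hδ, smul_smul, mul_inv_cancel₀ ht.ne', one_smul]
  have h := congrArg (fun L : StrongDual ℝ X => L δ) (heq t ht0)
  simp only [ContinuousLinearMap.smul_apply, smul_eq_mul] at h
  rw [hA t (u t - u₀) δ] at h
  rw [hut] at h
  rw [real_inner_smul_left, real_inner_self_eq_norm_sq] at h
  have key : ‖δ‖ ^ 2 = F u₀ δ + F' u₀ (u t - u₀) δ := by
    have htne := ht.ne'
    rw [hut]
    have h2 : t * ‖δ‖ ^ 2 = t * (F u₀ δ + F' u₀ (t • δ) δ) := by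
      have : (F' u₀) (t • δ) δ = t * (F' u₀) δ δ := by
        simp [ContinuousLinearMap.map_smul]
      rw [this] at h ⊢
      ring_nf
      ring_nf at h
      nlinarith [h]
    exact mul_left_cancel₀ htne h2
  rw [intsplit, ftc1, ftc2, hu0, key]
  simp [map_sub]
end

section
/- Let u : [0,∞) → X be a continuously differentiable path with u(0) = u₀ satisfying A[s;u₀](u(s) − u₀) = s F(u₀) in X' for all s ≥ 0, where F is Fréchet differentiable with derivative F' satisfying the Lipschitz condition (A.2). Fix t > 0 and set δ := (u(t) − u₀)/t with δ ≠ 0. Then |⟨F(u(t)), δ⟩ − ‖δ‖²_X| / ‖δ‖_X ≤ L ∫₀ᵗ ‖u(s) − u₀‖_X ‖u̇(s)‖_X ds. -/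
open NormedSpace Set intervalIntegral
open scoped RealInnerProductSpace

/-- For a continuously differentiable path `u` with `u(0) = u₀`
satisfying `A[s;u₀](u(s) − u₀) = s F(u₀)` for all `s ≥ 0`, with `F` Fréchet
differentiable and `F'` Lipschitz (A.2), fixing `t > 0` and `δ = (u(t) − u₀)/t ≠ 0`,
one has `|⟨F(u(t)), δ⟩ − ‖δ‖²|/‖δ‖ ≤ L ∫₀ᵗ ‖u(s) − u₀‖ ‖u̇(s)‖ ds`. -/
theorem stmt_19 {X : Type*} [NormedAddCommGroup X] [InnerProductSpace ℝ X] [CompleteSpace X]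
    (u₀ : X) (F : X → StrongDual ℝ X) (F' : X → (X →L[ℝ] StrongDual ℝ X))
    (hF : ∀ x : X, HasFDerivAt F (F' x) x)
    (L : ℝ) (hL : 0 ≤ L)
    (hA2 : ∀ x y : X, ‖F' x - F' y‖ ≤ L * ‖x - y‖)
    (A : ℝ → X →L[ℝ] StrongDual ℝ X)
    (hA : ∀ (s : ℝ) (x v : X), A s x v = ⟪x, v⟫ - s * (F' u₀) x v)
    (u u' : ℝ → X)
    (hderiv : ∀ s ∈ Ici (0 : ℝ), HasDerivWithinAt u (u' s) (Ici 0) s)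
    (hu'cont : ContinuousOn u' (Ici 0))
    (hu0 : u 0 = u₀)
    (heq : ∀ s ∈ Ici (0 : ℝ), A s (u s - u₀) = s • F u₀)
    (t : ℝ) (ht : 0 < t) (δ : X) (hδ : δ = t⁻¹ • (u t - u₀)) (hδ0 : δ ≠ 0)
    (hcont : ContinuousOn (fun s => (F' (u s) - F' u₀) (u' s)) (Icc 0 t)) :
    |F (u t) δ - ‖δ‖ ^ 2| / ‖δ‖ ≤ L * ∫ s in (0 : ℝ)..t, ‖u s - u₀‖ * ‖u' s‖ := by
  set T : StrongDual ℝ X →L[ℝ] ℝ := ContinuousLinearMap.apply ℝ ℝ δ with hT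
  have hIcc : Icc (0 : ℝ) t ⊆ Ici 0 := fun x hx => hx.1
  -- the auxiliary function and its derivative
  set h : ℝ → ℝ := fun s => F (u s) δ - (F' u₀) (u s - u₀) δ with hh
  have hd : ∀ s ∈ Ici (0 : ℝ),
      HasDerivWithinAt h ((F' (u s) - F' u₀) (u' s) δ) (Ici 0) s := by
    intro s hs
    have h1 : HasDerivWithinAt (fun s => F (u s) δ) (T (F' (u s) (u' s))) (Ici 0) s :=
      T.hasFDerivAt.comp_hasDerivWithinAt s ((hF (u s)).comp_hasDerivWithinAt s (hderiv s hs))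
    have h2 : HasDerivWithinAt (fun s => (F' u₀) (u s - u₀) δ)
        ((T.comp (F' u₀)) (u' s)) (Ici 0) s :=
      (T.comp (F' u₀)).hasFDerivAt.comp_hasDerivWithinAt s ((hderiv s hs).sub_const u₀)
    have heqd : (F' (u s) - F' u₀) (u' s) δ
        = T (F' (u s) (u' s)) - (T.comp (F' u₀)) (u' s) := by
      simp [hT, ContinuousLinearMap.sub_apply]
    rw [hh, heqd]
    exact h1.sub h2
  -- continuity of u on [0,t]
  have hucont : ContinuousOn u (Icc 0 t) := fun s hs =>
    ((hderiv s (hIcc hs)).continuousWithinAt).mono hIcc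
  -- FTC
  have hhcont : ContinuousOn h (Icc 0 t) := fun s hs =>
    ((hd s (hIcc hs)).continuousWithinAt).mono hIcc
  have hintg : IntervalIntegrable (fun s => (F' (u s) - F' u₀) (u' s) δ) MeasureTheory.volume 0 t := by
    apply ContinuousOn.intervalIntegrable
    rw [uIcc_of_le ht.le]
    exact hcont.clm_apply continuousOn_const
  have key : (∫ s in (0:ℝ)..t, (F' (u s) - F' u₀) (u' s) δ) = h t - h 0 := by
    apply integral_eq_sub_of_hasDeriv_right_of_le ht.le hhcont _ hintg
    intro x hx
    exact (hd x (le_of_lt hx.1)).mono fun y hy => le_of_lt (hx.1.trans hy)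
  -- u t - u₀ = t • δ
  have hut : u t - u₀ = t • δ := by
    rw [hδ, smul_smul, mul_inv_cancel₀ ht.ne', one_smul]
  -- the identity from the equation at s = t
  have hid : F u₀ δ = ‖δ‖ ^ 2 - t * ((F' u₀) δ δ) := by
    have e1 : A t (u t - u₀) δ = (t • F u₀) δ := by rw [heq t ht.le]
    rw [ContinuousLinearMap.smul_apply, hA, hut] at e1
    simp only [map_smul, ContinuousLinearMap.smul_apply, real_inner_smul_left,
      real_inner_self_eq_norm_sq, smul_eq_mul] at e1
    have : t * (‖δ‖ ^ 2 - t * ((F' u₀) δ δ)) = t * F u₀ δ := by ring_nf; linarith [e1]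
    have := mul_left_cancel₀ ht.ne' this
    linarith
  -- h t - h 0 = F (u t) δ - ‖δ‖ ^ 2
  have hval : h t - h 0 = F (u t) δ - ‖δ‖ ^ 2 := by
    simp only [hh, hu0, sub_self, map_zero, ContinuousLinearMap.zero_apply, sub_zero, hut,
      map_smul, ContinuousLinearMap.smul_apply, smul_eq_mul]
    rw [hid]; ring
  have keq : F (u t) δ - ‖δ‖ ^ 2 = ∫ s in (0:ℝ)..t, (F' (u s) - F' u₀) (u' s) δ := by
    rw [key, hval]
  -- the bounding integrand
  have hbint : IntervalIntegrable (fun s => L * ‖δ‖ * (‖u s - u₀‖ * ‖u' s‖))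
      MeasureTheory.volume 0 t := by
    apply ContinuousOn.intervalIntegrable
    rw [uIcc_of_le ht.le]
    exact continuousOn_const.mul
      (((hucont.sub continuousOn_const).norm).mul ((hu'cont.mono hIcc).norm))
  have hbd : |F (u t) δ - ‖δ‖ ^ 2| ≤ L * ‖δ‖ * ∫ s in (0:ℝ)..t, ‖u s - u₀‖ * ‖u' s‖ := by
    rw [keq, ← Real.norm_eq_abs]
    calc ‖∫ s in (0:ℝ)..t, (F' (u s) - F' u₀) (u' s) δ‖
        ≤ ∫ s in (0:ℝ)..t, ‖(F' (u s) - F' u₀) (u' s) δ‖ :=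
          norm_integral_le_integral_norm ht.le
      _ ≤ ∫ s in (0:ℝ)..t, L * ‖δ‖ * (‖u s - u₀‖ * ‖u' s‖) := by
          apply integral_mono_on ht.le (hintg.norm) hbint
          intro s hs
          calc ‖(F' (u s) - F' u₀) (u' s) δ‖
              ≤ ‖(F' (u s) - F' u₀) (u' s)‖ * ‖δ‖ :=
                ((F' (u s) - F' u₀) (u' s)).le_opNorm δ
            _ ≤ (‖F' (u s) - F' u₀‖ * ‖u' s‖) * ‖δ‖ := by
                gcongr; exact (F' (u s) - F' u₀).le_opNorm (u' s)
            _ ≤ (L * ‖u s - u₀‖ * ‖u' s‖) * ‖δ‖ := by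
                gcongr; exact hA2 (u s) u₀
            _ = L * ‖δ‖ * (‖u s - u₀‖ * ‖u' s‖) := by ring
      _ = L * ‖δ‖ * ∫ s in (0:ℝ)..t, ‖u s - u₀‖ * ‖u' s‖ := integral_const_mul _ _
  have hδpos : (0:ℝ) < ‖δ‖ := norm_pos_iff.mpr hδ0
  rw [div_le_iff₀ hδpos]
  calc |F (u t) δ - ‖δ‖ ^ 2| ≤ L * ‖δ‖ * ∫ s in (0:ℝ)..t, ‖u s - u₀‖ * ‖u' s‖ := hbd
    _ = L * (∫ s in (0:ℝ)..t, ‖u s - u₀‖ * ‖u' s‖) * ‖δ‖ := by ring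
end
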